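/- Let G be a finite simple connected graph with n ≥ 3 vertices. Then G induces a 4-periodic Grover walk if and only if G is isomorphic to a complete bipartite graph K_{r,s} for some positive integers r, s with r + s = n. -/

import Mathlib

open Matrix SimpleGraph

/-- The Grover transfer matrix `U = U(G)` of a finite simple graph `G`, a `2m × 2m`
complex matrix indexed by the darts (symmetric arcs) of `G`.  For darts `e, f`,
`U e f = 2/deg(t(f)) - 1` if `f = e⁻¹`, `U e f = 2/deg(t(f))` if `t(f) = o(e)` and
`f ≠ e⁻¹`, and `U e f = 0` otherwise. -/
noncomputable def groverMatrix {V : Type*} [Fintype V] [DecidableEq V]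
    (G : SimpleGraph V) [DecidableRel G.Adj] : Matrix G.Dart G.Dart ℂ :=
  fun e f =>
    if f = e.symm then 2 / (G.degree f.snd : ℂ) - 1
    else if f.snd = e.fst then 2 / (G.degree f.snd : ℂ)
    else 0

/-- `G` induces a `k`-periodic Grover walk: `U ^ k = 1` and `U ^ j ≠ 1` for `1 ≤ j < k`. -/
def InducesPeriodicGroverWalk {V : Type*} [Fintype V] [DecidableEq V]
    (G : SimpleGraph V) [DecidableRel G.Adj] (k : ℕ) : Prop :=
  groverMatrix G ^ k = 1 ∧ ∀ j : ℕ, 1 ≤ j → j < k → groverMatrix G ^ j ≠ 1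

/-- The transition matrix of the isotropic random walk on `G`:
`T u v = 1/deg(u)` if `u ∼ v` and `0` otherwise. -/
noncomputable def transitionMatrix {V : Type*} [Fintype V]
    (G : SimpleGraph V) [DecidableRel G.Adj] : Matrix V V ℝ :=
  fun u v => if G.Adj u v then 1 / (G.degree u : ℝ) else 0

/-!
Write `U = 2 K - S`, where `S` reverses darts and `K e f = [t f = o e] / deg (t f)` is the
transition matrix of the random walk on darts. With `Q`, `P` the tail and head incidence matrices
and `D` the diagonal matrix of degrees, `K = Q D⁻¹ Pᵀ`, `S P = Q` and `Pᵀ P = D`; this gives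
`U Uᵀ = 1`, so `U ^ 4 = 1` iff `U ^ 2` is symmetric, and
`U ^ 2 = 4 Q (D⁻¹ A D⁻¹) Pᵀ - 2 Q D⁻¹ Qᵀ - 2 P D⁻¹ Pᵀ + 1`.
Only the first term can fail to be symmetric, and its symmetry says: for darts `(a, b)`, `(c, d)`,
`a ∼ d ↔ c ∼ b`, with `deg a * deg d = deg c * deg b` when they are adjacent. In a connected graph
this makes the endpoints of every walk of length three adjacent, which forces `G` to be complete
bipartite; conversely `K_{r,s}` satisfies it because the degree is constant on each side. Finally
`U ^ 2` has diagonal entries `(2 / deg a - 1) (2 / deg b - 1)`, equal to `1` only when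
`deg a + deg b = 2`, whereas in `K_{r,s}` this sum is `r + s ≥ 3`.
-/

theorem Matrix.pow_four_eq_one_iff_isSymm_sq {n R : Type*} [Fintype n] [DecidableEq n]
    [CommRing R] {U : Matrix n n R} (hU : U * Uᵀ = 1) : U ^ 4 = 1 ↔ (U ^ 2).IsSymm := by
  have hinv : (U ^ 2)ᵀ * U ^ 2 = 1 := by
    have hU' : Uᵀ * U = 1 := mul_eq_one_comm.1 hU
    rw [transpose_pow, sq, sq, Matrix.mul_assoc, ← Matrix.mul_assoc Uᵀ U U, hU', Matrix.one_mul,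
      hU']
  rw [show 4 = 2 + 2 from rfl, pow_add]
  exact ⟨left_inv_eq_right_inv hinv, fun h => by rwa [h.eq] at hinv⟩

namespace SimpleGraph

open Finset

section WalksOfLengthThree

variable {V : Type*} {G : SimpleGraph V}
  (h3 : ∀ {a b c d : V}, G.Adj a b → G.Adj b c → G.Adj c d → G.Adj a d)
include h3

theorem adj_of_odd_length : ∀ {u v : V} (w : G.Walk u v), Odd w.length → G.Adj u v
  | _, _, .nil, h => absurd h (by simp)
  | _, _, .cons h .nil, _ => h
  | _, _, .cons h (.cons h' w), hw =>
    h3 h h' (adj_of_odd_length w (by simpa [Walk.length_cons, Nat.odd_add_one] using hw))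

theorem adj_iff_not_adj_iff_adj (hG : G.Preconnected) {u x : V} (hux : G.Adj u x) (v w : V) :
    G.Adj v w ↔ ¬(G.Adj u v ↔ G.Adj u w) := by
  have hcover : ∀ v, G.Adj u v ∨ G.Adj x v := fun v => by
    obtain ⟨p⟩ := hG u v
    rcases Nat.even_or_odd p.length with hp | hp
    · exact .inr (adj_of_odd_length h3 (.cons hux.symm p) (by simpa [Nat.odd_add_one] using hp))
    · exact .inl (adj_of_odd_length h3 p hp)
  have htriangle : ∀ {a b c : V}, G.Adj a b → G.Adj b c → ¬G.Adj c a := fun hab hbc hca =>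
    G.irrefl (h3 hab hbc hca)
  constructor
  · intro hvw h
    by_cases huv : G.Adj u v
    · exact htriangle huv hvw (h.1 huv).symm
    · have hxv := (hcover v).resolve_left huv
      have hxw := (hcover w).resolve_left (mt h.2 huv)
      exact htriangle hxv hvw hxw.symm
  · intro h
    by_cases huv : G.Adj u v
    · have hxw := (hcover w).resolve_left fun huw => h (iff_of_true huv huw)
      exact h3 huv.symm hux hxw
    · have huw : G.Adj u w := by tauto
      exact (h3 huw.symm hux ((hcover v).resolve_left huv)).symm

end WalksOfLengthThree

section Bipartition

variable {V : Type*} {G : SimpleGraph V} {p : V → Prop} (hp : ∀ v w, G.Adj v w ↔ ¬(p v ↔ p w))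
include hp

def isoCompleteBipartiteGraph [DecidablePred p] :
    G ≃g completeBipartiteGraph {v // p v} {v // ¬p v} where
  toEquiv := (Equiv.sumCompl p).symm
  map_rel_iff' {v w} := by
    rw [hp]
    by_cases hv : p v <;> by_cases hw : p w <;> simp [hv, hw]

theorem exists_iso_completeBipartiteGraph [Fintype V] [DecidablePred p] {u x : V}
    (hux : G.Adj u x) :
    ∃ r s : ℕ, 0 < r ∧ 0 < s ∧ r + s = Fintype.card V ∧
      Nonempty (G ≃g completeBipartiteGraph (Fin r) (Fin s)) := by
  have hux' := (hp u x).1 hux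
  refine ⟨Fintype.card {v // p v}, Fintype.card {v // ¬p v}, ?_, ?_, ?_,
    ⟨(isoCompleteBipartiteGraph hp).trans
      (completeBipartiteGraphCongr (Fintype.equivFin _) (Fintype.equivFin _))⟩⟩
  · exact Fintype.card_pos_iff.2 (if hu : p u then ⟨⟨u, hu⟩⟩ else ⟨⟨x, by tauto⟩⟩)
  · exact Fintype.card_pos_iff.2 (if hu : p u then ⟨⟨x, by tauto⟩⟩ else ⟨⟨u, hu⟩⟩)
  · rw [← Fintype.card_sum]
    exact Fintype.card_congr (Equiv.sumCompl p)

variable [Fintype V] [DecidableRel G.Adj]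

theorem degree_eq_card_filter [DecidablePred p] (v : V) :
    G.degree v = #{w | ¬(p v ↔ p w)} := by
  rw [← card_neighborFinset_eq_degree, neighborFinset_eq_filter]
  simp only [hp]

theorem degree_eq_degree_of_iff {v w : V} (h : p v ↔ p w) : G.degree v = G.degree w := by
  classical
  simp only [degree_eq_card_filter hp, h]

theorem degree_add_degree_of_adj {v w : V} (h : G.Adj v w) :
    G.degree v + G.degree w = Fintype.card V := by
  classical
  have hw : univ.filter (fun z => ¬(p w ↔ p z)) = univ.filter (fun z => ¬¬(p v ↔ p z)) := by
    have := (hp v w).1 h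
    ext z
    simp only [mem_filter, mem_univ, true_and]
    tauto
  rw [degree_eq_card_filter hp, degree_eq_card_filter hp w, hw, card_filter_add_card_filter_not,
    card_univ]

end Bipartition

section IncidenceMatrices

variable {V : Type*} [DecidableEq V] (G : SimpleGraph V) (R : Type*) [CommSemiring R]

def dartTailMatrix : Matrix G.Dart V R :=
  (1 : Matrix V V R).submatrix (fun e : G.Dart => e.fst) id

def dartHeadMatrix : Matrix G.Dart V R :=
  (1 : Matrix V V R).submatrix (fun e : G.Dart => e.snd) id

def dartSymmMatrix : Matrix G.Dart G.Dart R :=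
  (1 : Matrix G.Dart G.Dart R).submatrix Dart.symm id

variable {G R}

theorem transpose_dartSymmMatrix : (G.dartSymmMatrix R)ᵀ = G.dartSymmMatrix R := by
  ext e f
  simp only [dartSymmMatrix, transpose_apply, submatrix_apply, id, one_apply]
  congr 1
  exact propext ⟨fun h => h ▸ f.symm_symm, fun h => h ▸ e.symm_symm⟩

variable [Fintype V] {α : Type*}

theorem dartTailMatrix_mul (M : Matrix V α R) :
    G.dartTailMatrix R * M = M.submatrix (fun e : G.Dart => e.fst) id :=
  one_submatrix_mul _ (Equiv.refl _) M

theorem dartHeadMatrix_mul (M : Matrix V α R) :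
    G.dartHeadMatrix R * M = M.submatrix (fun e : G.Dart => e.snd) id :=
  one_submatrix_mul _ (Equiv.refl _) M

theorem mul_transpose_dartTailMatrix [Fintype α] (M : Matrix α V R) :
    M * (G.dartTailMatrix R)ᵀ = M.submatrix id (fun e : G.Dart => e.fst) := by
  rw [dartTailMatrix, transpose_submatrix, transpose_one]
  exact mul_submatrix_one (Equiv.refl _) _ M

theorem mul_transpose_dartHeadMatrix [Fintype α] (M : Matrix α V R) :
    M * (G.dartHeadMatrix R)ᵀ = M.submatrix id (fun e : G.Dart => e.snd) := by
  rw [dartHeadMatrix, transpose_submatrix, transpose_one]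
  exact mul_submatrix_one (Equiv.refl _) _ M

variable [DecidableRel G.Adj]

theorem dartSymmMatrix_mul (M : Matrix G.Dart α R) :
    G.dartSymmMatrix R * M = M.submatrix Dart.symm id :=
  one_submatrix_mul _ (Equiv.refl _) M

theorem dartSymmMatrix_mul_self : G.dartSymmMatrix R * G.dartSymmMatrix R = 1 := by
  rw [dartSymmMatrix_mul, dartSymmMatrix, submatrix_submatrix]
  simp

theorem dartSymmMatrix_mul_dartTailMatrix :
    G.dartSymmMatrix R * G.dartTailMatrix R = G.dartHeadMatrix R := by
  rw [dartSymmMatrix_mul, dartTailMatrix, submatrix_submatrix]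
  rfl

theorem dartSymmMatrix_mul_dartHeadMatrix :
    G.dartSymmMatrix R * G.dartHeadMatrix R = G.dartTailMatrix R := by
  rw [dartSymmMatrix_mul, dartHeadMatrix, submatrix_submatrix]
  rfl

theorem transpose_dartHeadMatrix_mul_dartSymmMatrix :
    (G.dartHeadMatrix R)ᵀ * G.dartSymmMatrix R = (G.dartTailMatrix R)ᵀ := by
  rw [← transpose_dartSymmMatrix, ← transpose_mul, dartSymmMatrix_mul_dartHeadMatrix]

theorem transpose_dartTailMatrix_mul_self :
    (G.dartTailMatrix R)ᵀ * G.dartTailMatrix R = G.degMatrix R := by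
  ext v w
  simp only [mul_apply, dartTailMatrix, transpose_apply, submatrix_apply, id, one_apply, degMatrix,
    diagonal_apply, mul_boole]
  split_ifs with hvw
  · subst hvw
    simp only [← ite_and, and_self]
    rw [Finset.sum_boole, G.dart_fst_fiber_card_eq_degree]
  · exact Finset.sum_eq_zero fun e _ => by grind

theorem transpose_dartHeadMatrix_mul_self :
    (G.dartHeadMatrix R)ᵀ * G.dartHeadMatrix R = G.degMatrix R := by
  rw [← dartSymmMatrix_mul_dartTailMatrix, transpose_mul, transpose_dartSymmMatrix,
    Matrix.mul_assoc, ← Matrix.mul_assoc (G.dartSymmMatrix R), dartSymmMatrix_mul_self,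
    Matrix.one_mul, transpose_dartTailMatrix_mul_self]

theorem transpose_dartHeadMatrix_mul_dartTailMatrix :
    (G.dartHeadMatrix R)ᵀ * G.dartTailMatrix R = G.adjMatrix R := by
  ext v w
  simp only [mul_apply, dartHeadMatrix, dartTailMatrix, transpose_apply, submatrix_apply, id,
    one_apply, adjMatrix_apply, mul_boole, ← ite_and]
  by_cases hvw : G.Adj v w
  · rw [if_pos hvw, Fintype.sum_eq_single ⟨(w, v), hvw.symm⟩ fun e he => if_neg fun h => he ?_]
    · simp
    · exact Dart.ext _ _ (Prod.ext h.1 h.2)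
  · rw [if_neg hvw]
    exact Finset.sum_eq_zero fun e _ => if_neg fun ⟨h1, h2⟩ => hvw (h1 ▸ h2 ▸ e.adj.symm)

end IncidenceMatrices

section GroverMatrix

variable {V : Type*} [Fintype V] [DecidableEq V] (G : SimpleGraph V) [DecidableRel G.Adj]
  (𝕜 : Type*) [Field 𝕜]

noncomputable def invDegMatrix : Matrix V V 𝕜 :=
  diagonal fun v => (G.degree v : 𝕜)⁻¹

/-- The entry at `(e, f)` is `1 / deg f.snd` if `f.snd = e.fst`, and `0` otherwise. -/
noncomputable def dartTransitionMatrix : Matrix G.Dart G.Dart 𝕜 :=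
  G.dartTailMatrix 𝕜 * G.invDegMatrix 𝕜 * (G.dartHeadMatrix 𝕜)ᵀ

variable {G 𝕜}

theorem transpose_invDegMatrix : (G.invDegMatrix 𝕜)ᵀ = G.invDegMatrix 𝕜 := diagonal_transpose _

/-- Since `0⁻¹ = 0`, this holds also at isolated vertices. -/
theorem invDegMatrix_mul_degMatrix_mul_invDegMatrix :
    G.invDegMatrix 𝕜 * G.degMatrix 𝕜 * G.invDegMatrix 𝕜 = G.invDegMatrix 𝕜 := by
  simp only [invDegMatrix, degMatrix, diagonal_mul_diagonal]
  congr 1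
  funext v
  simpa using mul_inv_mul_cancel (G.degree v : 𝕜)⁻¹

theorem transpose_dartTransitionMatrix :
    (G.dartTransitionMatrix 𝕜)ᵀ =
      G.dartHeadMatrix 𝕜 * G.invDegMatrix 𝕜 * (G.dartTailMatrix 𝕜)ᵀ := by
  simp only [dartTransitionMatrix, transpose_mul, transpose_transpose, transpose_invDegMatrix,
    Matrix.mul_assoc]

theorem dartTransitionMatrix_mul_transpose :
    G.dartTransitionMatrix 𝕜 * (G.dartTransitionMatrix 𝕜)ᵀ =
      G.dartTailMatrix 𝕜 * G.invDegMatrix 𝕜 * (G.dartTailMatrix 𝕜)ᵀ := by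
  calc G.dartTransitionMatrix 𝕜 * (G.dartTransitionMatrix 𝕜)ᵀ
      = G.dartTailMatrix 𝕜 * (G.invDegMatrix 𝕜 * ((G.dartHeadMatrix 𝕜)ᵀ * G.dartHeadMatrix 𝕜) *
          G.invDegMatrix 𝕜) * (G.dartTailMatrix 𝕜)ᵀ := by
        rw [transpose_dartTransitionMatrix]
        simp only [dartTransitionMatrix, Matrix.mul_assoc]
    _ = _ := by
        rw [transpose_dartHeadMatrix_mul_self, invDegMatrix_mul_degMatrix_mul_invDegMatrix]

theorem dartTransitionMatrix_mul_dartSymmMatrix :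
    G.dartTransitionMatrix 𝕜 * G.dartSymmMatrix 𝕜 =
      G.dartTailMatrix 𝕜 * G.invDegMatrix 𝕜 * (G.dartTailMatrix 𝕜)ᵀ := by
  rw [dartTransitionMatrix, Matrix.mul_assoc, transpose_dartHeadMatrix_mul_dartSymmMatrix]

theorem dartSymmMatrix_mul_transpose_dartTransitionMatrix :
    G.dartSymmMatrix 𝕜 * (G.dartTransitionMatrix 𝕜)ᵀ =
      G.dartTailMatrix 𝕜 * G.invDegMatrix 𝕜 * (G.dartTailMatrix 𝕜)ᵀ := by
  rw [transpose_dartTransitionMatrix, ← Matrix.mul_assoc, ← Matrix.mul_assoc,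
    dartSymmMatrix_mul_dartHeadMatrix]

theorem dartSymmMatrix_mul_dartTransitionMatrix :
    G.dartSymmMatrix 𝕜 * G.dartTransitionMatrix 𝕜 =
      G.dartHeadMatrix 𝕜 * G.invDegMatrix 𝕜 * (G.dartHeadMatrix 𝕜)ᵀ := by
  rw [dartTransitionMatrix, ← Matrix.mul_assoc, ← Matrix.mul_assoc,
    dartSymmMatrix_mul_dartTailMatrix]

theorem dartTransitionMatrix_mul_self :
    G.dartTransitionMatrix 𝕜 * G.dartTransitionMatrix 𝕜 =
      G.dartTailMatrix 𝕜 * (G.invDegMatrix 𝕜 * G.adjMatrix 𝕜 * G.invDegMatrix 𝕜) *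
        (G.dartHeadMatrix 𝕜)ᵀ := by
  rw [← transpose_dartHeadMatrix_mul_dartTailMatrix]
  simp only [dartTransitionMatrix, Matrix.mul_assoc]

theorem groverMatrix_eq :
    groverMatrix G = (2 : ℂ) • G.dartTransitionMatrix ℂ - G.dartSymmMatrix ℂ := by
  ext e f
  rw [dartTransitionMatrix, mul_transpose_dartHeadMatrix, dartTailMatrix_mul]
  simp only [groverMatrix, invDegMatrix, dartSymmMatrix, Matrix.sub_apply, Matrix.smul_apply,
    submatrix_apply, id, diagonal_apply, one_apply, smul_eq_mul]
  by_cases hf : f = e.symm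
  · subst hf
    simp [div_eq_mul_inv]
    rfl
  by_cases h : f.snd = e.fst
  · simp [hf, h, eq_comm (a := e.symm), div_eq_mul_inv]
    rw [h]
  · simp [hf, h, eq_comm (a := e.symm), Ne.symm h]

theorem groverMatrix_mul_transpose : groverMatrix G * (groverMatrix G)ᵀ = 1 := by
  rw [groverMatrix_eq, transpose_sub, transpose_smul, transpose_dartSymmMatrix]
  simp only [sub_mul, mul_sub, Matrix.smul_mul, Matrix.mul_smul,
    dartTransitionMatrix_mul_transpose, dartTransitionMatrix_mul_dartSymmMatrix,
    dartSymmMatrix_mul_transpose_dartTransitionMatrix, dartSymmMatrix_mul_self]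
  module

theorem groverMatrix_sq :
    groverMatrix G ^ 2 =
      (4 : ℂ) • (G.dartTailMatrix ℂ * (G.invDegMatrix ℂ * G.adjMatrix ℂ * G.invDegMatrix ℂ) *
          (G.dartHeadMatrix ℂ)ᵀ)
        - (2 : ℂ) • (G.dartTailMatrix ℂ * G.invDegMatrix ℂ * (G.dartTailMatrix ℂ)ᵀ)
        - (2 : ℂ) • (G.dartHeadMatrix ℂ * G.invDegMatrix ℂ * (G.dartHeadMatrix ℂ)ᵀ) + 1 := by
  rw [sq, groverMatrix_eq]
  simp only [sub_mul, mul_sub, Matrix.smul_mul, Matrix.mul_smul, dartTransitionMatrix_mul_self,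
    dartTransitionMatrix_mul_dartSymmMatrix, dartSymmMatrix_mul_dartTransitionMatrix,
    dartSymmMatrix_mul_self]
  module

theorem isSymm_groverMatrix_sq_iff :
    (groverMatrix G ^ 2).IsSymm ↔ ∀ e f : G.Dart,
      (G.invDegMatrix ℂ * G.adjMatrix ℂ * G.invDegMatrix ℂ) f.fst e.snd =
        (G.invDegMatrix ℂ * G.adjMatrix ℂ * G.invDegMatrix ℂ) e.fst f.snd := by
  have hsymm (M : Matrix G.Dart V ℂ) :
      (M * G.invDegMatrix ℂ * Mᵀ)ᵀ = M * G.invDegMatrix ℂ * Mᵀ := by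
    rw [transpose_mul, transpose_mul, transpose_transpose, transpose_invDegMatrix, Matrix.mul_assoc]
  rw [groverMatrix_sq, IsSymm, transpose_add, transpose_sub, transpose_sub, transpose_smul,
    transpose_smul, transpose_smul, hsymm, hsymm, transpose_one, add_left_inj, sub_left_inj,
    sub_left_inj, smul_right_inj (by norm_num : (4 : ℂ) ≠ 0), ← IsSymm, IsSymm.ext_iff,
    mul_transpose_dartHeadMatrix, dartTailMatrix_mul]
  rfl

theorem invDegMatrix_mul_adjMatrix_mul_invDegMatrix_apply (v w : V) :
    (G.invDegMatrix 𝕜 * G.adjMatrix 𝕜 * G.invDegMatrix 𝕜) v w =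
      if G.Adj v w then (G.degree v : 𝕜)⁻¹ * (G.degree w : 𝕜)⁻¹ else 0 := by
  rw [invDegMatrix, mul_diagonal, diagonal_mul, adjMatrix_apply]
  split_ifs <;> simp

theorem adj_of_groverMatrix_pow_four_eq_one (h4 : groverMatrix G ^ 4 = 1) {a b c d : V}
    (hab : G.Adj a b) (hbc : G.Adj b c) (hcd : G.Adj c d) : G.Adj a d := by
  have hN := isSymm_groverMatrix_sq_iff.1
    ((pow_four_eq_one_iff_isSymm_sq groverMatrix_mul_transpose).1 h4) ⟨(c, d), hcd⟩ ⟨(a, b), hab⟩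
  simp only [invDegMatrix_mul_adjMatrix_mul_invDegMatrix_apply, if_pos hbc.symm] at hN
  by_contra had
  rw [if_neg had] at hN
  have hc : (G.degree c : ℂ) ≠ 0 := Nat.cast_ne_zero.2 hcd.degree_pos_left.ne'
  have hb : (G.degree b : ℂ) ≠ 0 := Nat.cast_ne_zero.2 hbc.degree_pos_left.ne'
  exact mul_ne_zero (inv_ne_zero hc) (inv_ne_zero hb) hN.symm

theorem groverMatrix_pow_four_eq_one_of_adj_iff {p : V → Prop}
    (hp : ∀ v w, G.Adj v w ↔ ¬(p v ↔ p w)) : groverMatrix G ^ 4 = 1 := by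
  rw [pow_four_eq_one_iff_isSymm_sq groverMatrix_mul_transpose, isSymm_groverMatrix_sq_iff]
  intro e f
  have he := (hp _ _).1 e.adj
  have hf := (hp _ _).1 f.adj
  simp only [invDegMatrix_mul_adjMatrix_mul_invDegMatrix_apply]
  by_cases h : p f.fst ↔ p e.fst
  · rw [if_pos ((hp _ _).2 (by tauto)), if_pos ((hp _ _).2 (by tauto)),
      degree_eq_degree_of_iff hp h, degree_eq_degree_of_iff hp (show p e.snd ↔ p f.snd by tauto)]
  · rw [if_neg (mt (hp _ _).1 (by tauto)), if_neg (mt (hp _ _).1 (by tauto))]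

theorem degree_add_degree_eq_two_of_groverMatrix_sq_eq_one (h2 : groverMatrix G ^ 2 = 1)
    (e : G.Dart) : G.degree e.fst + G.degree e.snd = 2 := by
  have h := congrFun (congrFun (groverMatrix_sq (G := G)) e) e
  rw [h2] at h
  simp only [Matrix.add_apply, Matrix.sub_apply, Matrix.smul_apply, mul_transpose_dartHeadMatrix,
    mul_transpose_dartTailMatrix, dartTailMatrix_mul, dartHeadMatrix_mul, submatrix_apply, id,
    invDegMatrix_mul_adjMatrix_mul_invDegMatrix_apply, if_pos e.adj, one_apply_eq, smul_eq_mul] at h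
  simp only [invDegMatrix, diagonal_apply_eq] at h
  have ha : (G.degree e.fst : ℂ) ≠ 0 := Nat.cast_ne_zero.2 e.adj.degree_pos_left.ne'
  have hb : (G.degree e.snd : ℂ) ≠ 0 := Nat.cast_ne_zero.2 e.adj.degree_pos_right.ne'
  field_simp at h
  have hsum : (G.degree e.fst : ℂ) + G.degree e.snd = 2 := by linear_combination h / 2
  exact_mod_cast hsum

theorem inducesPeriodicGroverWalk_four_iff :
    InducesPeriodicGroverWalk G 4 ↔ groverMatrix G ^ 4 = 1 ∧ groverMatrix G ^ 2 ≠ 1 := by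
  have : InducesPeriodicGroverWalk G 4 ↔ orderOf (groverMatrix G) = 2 ^ (1 + 1) := by
    rw [orderOf_eq_iff (by norm_num), InducesPeriodicGroverWalk]
    exact and_congr_right' ⟨fun h j hj4 hj1 => h j hj1 hj4, fun h j hj1 hj4 => h j hj4 hj1⟩
  rw [this]
  refine ⟨fun h => ⟨by simpa [h] using pow_orderOf_eq_one (groverMatrix G), fun h2 => ?_⟩,
    fun h => orderOf_eq_prime_pow h.2 h.1⟩
  have := orderOf_dvd_of_pow_eq_one h2
  rw [h] at this
  norm_num at this

end GroverMatrix

end SimpleGraph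

open SimpleGraph

/-- **Theorem 4.1.** A finite simple connected graph `G` with `n ≥ 3`
vertices induces a `4`-periodic Grover walk iff `G` is isomorphic to a complete
bipartite graph `K_{r,s}` with `r + s = n`. -/
theorem four_periodic_iff_completeBipartite {V : Type*} [Fintype V] [DecidableEq V]
    (G : SimpleGraph V) [DecidableRel G.Adj] (hG : G.Connected)
    (hn : 3 ≤ Fintype.card V) :
    InducesPeriodicGroverWalk G 4 ↔
      ∃ r s : ℕ, 0 < r ∧ 0 < s ∧ r + s = Fintype.card V ∧
        Nonempty (G ≃g completeBipartiteGraph (Fin r) (Fin s)) := by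
  have : Nontrivial V := Fintype.one_lt_card_iff_nontrivial.1 (by omega)
  obtain ⟨u, x, hux⟩ : ∃ u x, G.Adj u x :=
    ⟨_, hG.preconnected.exists_adj_of_nontrivial (Classical.arbitrary V)⟩
  rw [inducesPeriodicGroverWalk_four_iff]
  constructor
  · rintro ⟨h4, -⟩
    exact exists_iso_completeBipartiteGraph
      (adj_iff_not_adj_iff_adj (adj_of_groverMatrix_pow_four_eq_one h4) hG.preconnected hux) hux
  · rintro ⟨r, s, -, -, -, ⟨φ⟩⟩
    have hp : ∀ v w, G.Adj v w ↔ ¬((φ v).isLeft ↔ (φ w).isLeft) := fun v w => by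
      rw [← φ.map_adj_iff]
      cases φ v <;> cases φ w <;> simp
    refine ⟨groverMatrix_pow_four_eq_one_of_adj_iff hp, fun h2 => ?_⟩
    have := degree_add_degree_eq_two_of_groverMatrix_sq_eq_one h2 ⟨(u, x), hux⟩
    rw [degree_add_degree_of_adj hp hux] at this
    omega
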